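/- Let d ∈ ℕ, 0 < θ ≤ 2 ≤ p < ∞ and r ≥ 0. Then for every f ∈ S^{r+1/θ−1/2}_{p,θ}B one has ‖f‖_{S^r_θ A} ≤ ‖f‖_{S^{r+1/θ−1/2}_{p,θ}B}, and equality holds for the constant function f ≡ 1; in particular the embedding S^{r+1/θ−1/2}_{p,θ}B ↪ S^r_θ A has norm exactly 1. -/

import Mathlib

/-!
On a dyadic block `I_j` every frequency has weight `∏ (1 + |k_i|) ≤ 2^{|j|₁}` and there are at
most `2^{|j|₁}` frequencies, so Hölder's inequality bounds the `ℓ_θ` norm of the weighted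
coefficients on `I_j` by `2^{|j|₁ (r + 1/θ - 1/2)}` times the `ℓ_2` norm of the plain
coefficients. By Parseval and `p ≥ 2` that `ℓ_2` norm is at most the `L_p` norm of the block projection. Summing `θ`-th
powers over the blocks, which partition `ℤ^d`, gives the inequality; for `f ≡ 1` only the
block `j = 0` contributes and both norms equal `1`.
-/

open MeasureTheory Real ENNReal

noncomputable section

namespace Paper

/-- The fundamental domain `[0,1)^d` of the `d`-dimensional torus `𝕋^d`. -/
def cube (d : ℕ) : Set (Fin d → ℝ) := Set.univ.pi fun _ => Set.Ico (0:ℝ) 1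

/-- The trigonometric character `x ↦ e^{2π i k·x}`. -/
def expk (d : ℕ) (k : Fin d → ℤ) (x : Fin d → ℝ) : ℂ :=
  Complex.exp (((2 * Real.pi * ∑ i, (k i : ℝ) * x i : ℝ) : ℂ) * Complex.I)

/-- Fourier coefficient `f̂(k) = ∫_{[0,1)^d} f(x) e^{-2π i k·x} dx`. -/
def fCoeff (d : ℕ) (f : (Fin d → ℝ) → ℂ) (k : Fin d → ℤ) : ℂ :=
  ∫ x in cube d, f x * expk d (-k) x

/-- The `L_q` (quasi-)norm on the torus, `q ∈ (0,∞]`, valued in `ℝ≥0∞`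
(for `q = ∞` this is the essential supremum). -/
def LqNorm (d : ℕ) (q : ℝ≥0∞) (f : (Fin d → ℝ) → ℂ) : ℝ≥0∞ :=
  eLpNorm f q (volume.restrict (cube d))

/-- The weight `∏_{i=1}^d (1+|k_i|)`. -/
def wt (d : ℕ) (k : Fin d → ℤ) : ℝ := ∏ i, (1 + |(k i : ℝ)|)

/-- The weighted Wiener (quasi-)norm `‖f‖_{S^r_θ A}`
(with the sup modification for `θ = ∞`); `A_θ` corresponds to `r = 0`,
the Wiener algebra `A` to `r = 0`, `θ = 1`. -/
def wienerNorm (d : ℕ) (r : ℝ) (θ : ℝ≥0∞) (f : (Fin d → ℝ) → ℂ) : ℝ≥0∞ :=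
  if θ = ∞ then ⨆ k : Fin d → ℤ, ENNReal.ofReal (wt d k ^ r) * (‖fCoeff d f k‖₊ : ℝ≥0∞)
  else (∑' k : Fin d → ℤ,
      (ENNReal.ofReal (wt d k ^ r) * (‖fCoeff d f k‖₊ : ℝ≥0∞)) ^ θ.toReal) ^ (1 / θ.toReal)

/-- Trigonometric polynomials with at most `m` terms. -/
def trigPoly (d m : ℕ) : Set ((Fin d → ℝ) → ℂ) :=
  {s | ∃ (Λ : Finset (Fin d → ℤ)) (a : (Fin d → ℤ) → ℂ),
    Λ.card ≤ m ∧ s = fun x => ∑ k ∈ Λ, a k * expk d k x}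

/-- Best `m`-term trigonometric approximation error of `f`, error measured by `X`. -/
def sigmaF (d m : ℕ) (X : ((Fin d → ℝ) → ℂ) → ℝ≥0∞) (f : (Fin d → ℝ) → ℂ) : ℝ≥0∞ :=
  ⨅ s ∈ trigPoly d m, X (f - s)

/-- The unit ball of the space (inside `L₁(𝕋^d)`) with (quasi-)norm `N`. -/
def unitBall (d : ℕ) (N : ((Fin d → ℝ) → ℂ) → ℝ≥0∞) : Set ((Fin d → ℝ) → ℂ) :=
  {f | IntegrableOn f (cube d) ∧ N f ≤ 1}

/-- Best `m`-term trigonometric width of the unit ball of `N`, error measured by `X`. -/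
def sigmaClass (d m : ℕ) (N X : ((Fin d → ℝ) → ℂ) → ℝ≥0∞) : ℝ≥0∞ :=
  ⨆ f ∈ unitBall d N, sigmaF d m X f

/-- `log*(m) = max (log₂ m) 1`. -/
def logStar (m : ℕ) : ℝ := max (Real.logb 2 m) 1

/-- Two-sided asymptotic equivalence `a_m ≍ b_m`. -/
def IsAsympEquiv (a : ℕ → ℝ≥0∞) (b : ℕ → ℝ) : Prop :=
  ∃ c C : ℝ, 0 < c ∧ 0 < C ∧ ∃ m₀ : ℕ, ∀ m : ℕ, m₀ ≤ m →
    ENNReal.ofReal (c * b m) ≤ a m ∧ a m ≤ ENNReal.ofReal (C * b m)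

/-- One-sided asymptotic bound `a_m ≲ b_m`. -/
def IsAsympLe (a : ℕ → ℝ≥0∞) (b : ℕ → ℝ) : Prop :=
  ∃ C : ℝ, 0 < C ∧ ∃ m₀ : ℕ, ∀ m : ℕ, m₀ ≤ m → a m ≤ ENNReal.ofReal (C * b m)

/-- Dyadic block `I_0 = {0}`, `I_n = {k : 2^{n-1} ≤ |k| < 2^n}` for `n ≥ 1`. -/
def blockF (n : ℕ) : Finset ℤ :=
  (Finset.Icc (-(2^n : ℤ)) (2^n)).filter fun k =>
    (n = 0 ∧ k = 0) ∨ (n ≠ 0 ∧ 2^(n-1) ≤ |k| ∧ |k| < 2^n)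

/-- The dyadic block projection `∑_{k ∈ I_j} f̂(k) e^{2π i k·x}`. -/
def blockProj (d : ℕ) (f : (Fin d → ℝ) → ℂ) (j : Fin d → ℕ) : (Fin d → ℝ) → ℂ :=
  fun x => ∑ k ∈ Fintype.piFinset (fun i => blockF (j i)), fCoeff d f k * expk d k x

/-- The mixed-smoothness Besov (quasi-)norm `‖f‖_{S^s_{p,θ}B}`
(with the sup modification for `θ = ∞`). -/
def besovNorm (d : ℕ) (s : ℝ) (p θ : ℝ≥0∞) (f : (Fin d → ℝ) → ℂ) : ℝ≥0∞ :=
  if θ = ∞ then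
    ⨆ j : Fin d → ℕ,
      ENNReal.ofReal ((2:ℝ) ^ (((∑ i, j i : ℕ) : ℝ) * s)) * LqNorm d p (blockProj d f j)
  else
    (∑' j : Fin d → ℕ,
      (ENNReal.ofReal ((2:ℝ) ^ (((∑ i, j i : ℕ) : ℝ) * s)) * LqNorm d p (blockProj d f j))
        ^ θ.toReal) ^ (1 / θ.toReal)

/-- The mixed-smoothness Sobolev norm `‖f‖_{S^s_p W}` (Littlewood–Paley form),
with `S^0_p W := L_p`. -/
def sobolevNorm (d : ℕ) (s : ℝ) (p : ℝ≥0∞) (f : (Fin d → ℝ) → ℂ) : ℝ≥0∞ :=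
  if s = 0 then LqNorm d p f
  else
    (∫⁻ x in cube d,
      ((∑' j : Fin d → ℕ,
        (ENNReal.ofReal ((2:ℝ) ^ (((∑ i, j i : ℕ) : ℝ) * s)) *
          (‖blockProj d f j x‖₊ : ℝ≥0∞)) ^ (2:ℕ)) ^ ((1:ℝ)/2)) ^ p.toReal) ^ (1 / p.toReal)

/-- Trigonometric polynomials with frequencies in `[-M,M]^d`. -/
def boxPoly (d M : ℕ) : Set ((Fin d → ℝ) → ℂ) :=
  {s | ∃ (Λ : Finset (Fin d → ℤ)) (a : (Fin d → ℤ) → ℂ),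
    (∀ k ∈ Λ, ∀ i, |k i| ≤ (M : ℤ)) ∧ s = fun x => ∑ k ∈ Λ, a k * expk d k x}

/-- Error of best approximation by trigonometric polynomials with
frequencies in `[-M,M]^d`, measured in `L_∞`. -/
def EBox (d M : ℕ) (f : (Fin d → ℝ) → ℂ) : ℝ≥0∞ :=
  ⨅ g ∈ boxPoly d M, LqNorm d ∞ (f - g)

/-- The `m`-th (non-linear) sampling width of the class of continuous functions
in the unit ball of `N`, error measured in `L_q`. -/
def samplingWidth (d m : ℕ) (N : ((Fin d → ℝ) → ℂ) → ℝ≥0∞) (q : ℝ≥0∞) : ℝ≥0∞ :=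
  ⨅ (t : Fin m → (Fin d → ℝ)) (_ : ∀ i, t i ∈ cube d)
    (R : (Fin m → ℂ) → ((Fin d → ℝ) → ℂ)),
    ⨆ f ∈ {f : (Fin d → ℝ) → ℂ | Continuous f ∧ N f ≤ 1},
      LqNorm d q (f - R fun i => f (t i))

open scoped ComplexConjugate Finset

lemma volume_cube (d : ℕ) : volume (cube d) = 1 := by
  simp [cube, volume_pi_pi]

instance (d : ℕ) : IsProbabilityMeasure (volume.restrict (cube d)) :=
  ⟨by rw [Measure.restrict_apply_univ, volume_cube]⟩

lemma expk_eq_prod (d : ℕ) (k : Fin d → ℤ) (x : Fin d → ℝ) :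
    expk d k x = ∏ i, Complex.exp (((2 * π * (k i : ℝ) * x i : ℝ) : ℂ) * Complex.I) := by
  rw [expk, ← Complex.exp_sum, ← Finset.sum_mul, Finset.mul_sum]
  push_cast
  simp only [mul_assoc]

lemma expk_zero (d : ℕ) (x : Fin d → ℝ) : expk d 0 x = 1 := by
  simp [expk]

lemma expk_sub (d : ℕ) (k l : Fin d → ℤ) (x : Fin d → ℝ) :
    expk d (k - l) x = expk d k x * conj (expk d l x) := by
  simp only [expk, ← Complex.exp_conj, ← Complex.exp_add, map_mul, Complex.conj_ofReal,
    Complex.conj_I, Pi.sub_apply, Int.cast_sub, sub_mul, Finset.sum_sub_distrib]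
  push_cast
  ring_nf

lemma continuous_expk (d : ℕ) (k : Fin d → ℤ) : Continuous (expk d k) := by
  unfold expk
  fun_prop

lemma norm_expk (d : ℕ) (k : Fin d → ℤ) (x : Fin d → ℝ) : ‖expk d k x‖ = 1 := by
  simp [expk, Complex.norm_exp]

lemma memLp_expk (d : ℕ) (k : Fin d → ℤ) (p : ℝ≥0∞) :
    MemLp (expk d k) p (volume.restrict (cube d)) :=
  .of_bound (continuous_expk d k).aestronglyMeasurable 1 (.of_forall fun x => (norm_expk d k x).le)

lemma integrable_expk (d : ℕ) (k : Fin d → ℤ) :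
    Integrable (expk d k) (volume.restrict (cube d)) :=
  memLp_one_iff_integrable.mp (memLp_expk d k 1)

lemma integral_exp_Ico (m : ℤ) :
    ∫ t in Set.Ico (0:ℝ) 1, Complex.exp (((2 * π * (m : ℝ) * t : ℝ) : ℂ) * Complex.I)
      = if m = 0 then 1 else 0 := by
  split_ifs with hm
  · simp [hm]
  have hc : (2 * π * m : ℂ) * Complex.I ≠ 0 := by simp [Real.pi_ne_zero, hm]
  have hlin (t : ℝ) : (((2 * π * m * t : ℝ) : ℂ) * Complex.I) = (2 * π * m : ℂ) * Complex.I * t := by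
    push_cast; ring
  simp_rw [hlin]
  rw [setIntegral_congr_set Ico_ae_eq_Ioc, ← intervalIntegral.integral_of_le zero_le_one,
    integral_exp_mul_complex hc]
  have hperiod : (2 * π * m : ℂ) * Complex.I * (1 : ℝ) = m * (2 * π * Complex.I) := by
    push_cast; ring
  rw [hperiod, Complex.exp_int_mul_two_pi_mul_I]
  simp

lemma integral_expk (d : ℕ) (m : Fin d → ℤ) :
    ∫ x in cube d, expk d m x = if m = 0 then 1 else 0 := by
  simp_rw [expk_eq_prod]
  rw [cube, volume_pi, Measure.restrict_pi_pi, integral_fintype_prod_eq_prod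
    (fun i t => Complex.exp (((2 * π * (m i : ℝ) * t : ℝ) : ℂ) * Complex.I))]
  simp_rw [integral_exp_Ico, Finset.prod_ite_zero, Finset.prod_const_one, funext_iff]
  simp

lemma integral_sum_mul_conj_sum (d : ℕ) (Λ : Finset (Fin d → ℤ)) (a : (Fin d → ℤ) → ℂ) :
    ∫ x in cube d, (∑ k ∈ Λ, a k * expk d k x) * conj (∑ k ∈ Λ, a k * expk d k x)
      = ∑ k ∈ Λ, a k * conj (a k) := by
  have hexpand (x : Fin d → ℝ) :
      (∑ k ∈ Λ, a k * expk d k x) * conj (∑ k ∈ Λ, a k * expk d k x)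
        = ∑ k ∈ Λ, ∑ l ∈ Λ, a k * conj (a l) * expk d (k - l) x := by
    simp only [map_sum, map_mul, Finset.sum_mul_sum, expk_sub]
    exact Finset.sum_congr rfl fun _ _ => Finset.sum_congr rfl fun _ _ => by ring
  simp_rw [hexpand]
  rw [integral_finsetSum _ fun k _ => integrable_finsetSum _ fun l _ =>
    (integrable_expk d _).const_mul _]
  refine Finset.sum_congr rfl fun k hk => ?_
  rw [integral_finsetSum _ fun l _ => (integrable_expk d _).const_mul _]
  simp_rw [integral_const_mul, integral_expk, sub_eq_zero, mul_ite, mul_one, mul_zero]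
  rw [Finset.sum_ite_eq Λ k, if_pos hk]

lemma memLp_sum_expk (d : ℕ) (Λ : Finset (Fin d → ℤ)) (a : (Fin d → ℤ) → ℂ) (p : ℝ≥0∞) :
    MemLp (fun x => ∑ k ∈ Λ, a k * expk d k x) p (volume.restrict (cube d)) :=
  memLp_finsetSum Λ fun k _ => (memLp_expk d k p).const_mul (a k)

lemma eLpNorm_two_sum_expk (d : ℕ) (Λ : Finset (Fin d → ℤ)) (a : (Fin d → ℤ) → ℂ) :
    eLpNorm (fun x => ∑ k ∈ Λ, a k * expk d k x) 2 (volume.restrict (cube d))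
      = (∑ k ∈ Λ, ‖a k‖ₑ ^ 2) ^ (1 / 2 : ℝ) := by
  have hnorm : ∫ x in cube d, ‖∑ k ∈ Λ, a k * expk d k x‖ ^ 2 = ∑ k ∈ Λ, ‖a k‖ ^ 2 := by
    apply Complex.ofReal_injective
    push_cast
    rw [← integral_complex_ofReal]
    push_cast
    simp_rw [← Complex.mul_conj']
    exact integral_sum_mul_conj_sum d Λ a
  rw [(memLp_sum_expk d Λ a 2).eLpNorm_eq_integral_rpow_norm two_ne_zero ofNat_ne_top]
  simp only [toReal_ofNat, Real.rpow_two, hnorm]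
  rw [← ENNReal.ofReal_rpow_of_nonneg (by positivity) (by norm_num), one_div,
    ENNReal.ofReal_sum_of_nonneg fun _ _ => by positivity]
  simp [ENNReal.ofReal_pow, ofReal_norm]

-- `Nat.size` is the binary length, so the dyadic blocks are its level sets on `|k|`.
lemma mem_blockF_iff {n : ℕ} {k : ℤ} : k ∈ blockF n ↔ k.natAbs.size = n := by
  rw [blockF, Finset.mem_filter, Finset.mem_Icc]
  rcases n with _ | m
  · simp only [Nat.size_eq_zero, Int.natAbs_eq_zero, pow_zero, true_and, ne_eq,
      not_true_eq_false, false_and, or_false]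
    omega
  · have hsize : k.natAbs.size = m + 1 ↔ (2:ℤ) ^ m ≤ |k| ∧ |k| < 2 ^ (m + 1) := by
      rw [Int.abs_eq_natAbs]
      norm_cast
      rw [← Nat.lt_size, ← Nat.size_le]
      omega
    rw [hsize, Nat.add_sub_cancel]
    constructor
    · rintro ⟨-, ⟨h, -⟩ | ⟨-, h⟩⟩
      · omega
      · exact h
    · intro h
      exact ⟨abs_le.mp h.2.le, .inr ⟨m.succ_ne_zero, h⟩⟩

lemma abs_lt_of_mem_blockF {n : ℕ} {k : ℤ} (hk : k ∈ blockF n) : |k| < 2 ^ n := by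
  rw [mem_blockF_iff] at hk
  rw [Int.abs_eq_natAbs, ← hk]
  exact_mod_cast Nat.lt_size_self _

lemma card_blockF_le (n : ℕ) : #(blockF n) ≤ 2 ^ n := by
  rcases n with _ | m
  · decide
  have hsub : blockF (m + 1)
      ⊆ Finset.Ico (2 ^ m) (2 ^ (m + 1)) ∪ Finset.Ioc (-2 ^ (m + 1)) (-2 ^ m) := by
    intro k hk
    simp only [blockF, Finset.mem_filter, Nat.add_sub_cancel, pow_succ] at hk
    simp only [Finset.mem_union, Finset.mem_Ico, Finset.mem_Ioc, pow_succ]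
    rcases abs_cases k with h | h <;> omega
  calc #(blockF (m + 1)) ≤ _ := Finset.card_le_card hsub
    _ ≤ _ := Finset.card_union_le _ _
    _ = 2 ^ (m + 1) := by
      have hcast : ((2 ^ m : ℕ) : ℤ) = 2 ^ m := by norm_num
      rw [Int.card_Ico, Int.card_Ioc, pow_succ, pow_succ, ← hcast]
      omega

lemma one_add_abs_le_of_mem_blockF {n : ℕ} {k : ℤ} (hk : k ∈ blockF n) :
    1 + |(k : ℝ)| ≤ 2 ^ n := by
  have h : 1 + |k| ≤ 2 ^ n := by linarith [abs_lt_of_mem_blockF hk]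
  exact_mod_cast h

lemma wt_le_of_mem_piFinset_blockF {d : ℕ} {j : Fin d → ℕ} {k : Fin d → ℤ}
    (hk : k ∈ Fintype.piFinset fun i => blockF (j i)) : wt d k ≤ 2 ^ ∑ i, j i := by
  rw [← Finset.prod_pow_eq_pow_sum]
  exact Finset.prod_le_prod (fun i _ => by positivity)
    fun i _ => one_add_abs_le_of_mem_blockF (Fintype.mem_piFinset.mp hk i)

lemma card_piFinset_blockF_le {ι : Type*} [Fintype ι] [DecidableEq ι] (j : ι → ℕ) :
    #(Fintype.piFinset fun i => blockF (j i)) ≤ 2 ^ ∑ i, j i := by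
  rw [Fintype.card_piFinset, ← Finset.prod_pow_eq_pow_sum]
  exact Finset.prod_le_prod' fun i _ => card_blockF_le (j i)

lemma tsum_eq_tsum_sum_piFinset_blockF {ι : Type*} [Fintype ι] [DecidableEq ι]
    (F : (ι → ℤ) → ℝ≥0∞) :
    ∑' k, F k = ∑' j : ι → ℕ, ∑ k ∈ Fintype.piFinset (fun i => blockF (j i)), F k := by
  rw [← ENNReal.tsum_fiberwise F fun k i => (k i).natAbs.size]
  congr 1 with j
  have hfiber : (fun k : ι → ℤ => fun i => (k i).natAbs.size) ⁻¹' {j}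
      = ↑(Fintype.piFinset fun i => blockF (j i)) := by
    ext k
    simp [mem_blockF_iff, funext_iff]
  rw [hfiber, Finset.tsum_subtype']

lemma _root_.ENNReal.sum_rpow_le_card_rpow_mul_sum_rpow {ι : Type*} (s : Finset ι) (c : ι → ℝ≥0∞)
    {t q : ℝ} (ht : 0 < t) (htq : t ≤ q) :
    ∑ k ∈ s, c k ^ t ≤ (#s : ℝ≥0∞) ^ (1 - t / q) * (∑ k ∈ s, c k ^ q) ^ (t / q) := by
  have hq : 0 < q := ht.trans_le htq
  have hholder := ENNReal.rpow_sum_le_const_mul_sum_rpow s (fun k => c k ^ t)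
    ((one_le_div ht).mpr htq)
  simp_rw [← ENNReal.rpow_mul, mul_div_cancel₀ q ht.ne'] at hholder
  calc ∑ k ∈ s, c k ^ t = ((∑ k ∈ s, c k ^ t) ^ (q / t)) ^ (t / q) := by
        rw [← ENNReal.rpow_mul, div_mul_div_comm, mul_comm, div_self (by positivity),
          ENNReal.rpow_one]
    _ ≤ ((#s : ℝ≥0∞) ^ (q / t - 1) * ∑ k ∈ s, c k ^ q) ^ (t / q) := by gcongr
    _ = (#s : ℝ≥0∞) ^ (1 - t / q) * (∑ k ∈ s, c k ^ q) ^ (t / q) := by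
        rw [ENNReal.mul_rpow_of_nonneg _ _ (by positivity), ← ENNReal.rpow_mul]
        congr 2
        field_simp

lemma ofReal_two_rpow_natCast_mul (N : ℕ) (s : ℝ) :
    ENNReal.ofReal ((2:ℝ) ^ ((N : ℝ) * s)) = ((2:ℝ≥0∞) ^ N) ^ s := by
  rw [Real.rpow_mul zero_le_two, Real.rpow_natCast,
    ← ENNReal.ofReal_rpow_of_pos (by positivity), ENNReal.ofReal_pow zero_le_two,
    ENNReal.ofReal_ofNat]

lemma rpow_sum_enorm_fCoeff_sq_le_LqNorm_blockProj {d : ℕ} {p : ℝ≥0∞} (hp : 2 ≤ p)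
    (f : (Fin d → ℝ) → ℂ) (j : Fin d → ℕ) :
    (∑ k ∈ Fintype.piFinset (fun i => blockF (j i)), ‖fCoeff d f k‖ₑ ^ 2) ^ (1 / 2 : ℝ)
      ≤ LqNorm d p (blockProj d f j) :=
  calc _ = LqNorm d 2 (blockProj d f j) := (eLpNorm_two_sum_expk d _ _).symm
    _ ≤ _ := eLpNorm_le_eLpNorm_of_exponent_le hp (memLp_sum_expk d _ _ 2).aestronglyMeasurable

lemma sum_rpow_le_rpow_besov_block {d : ℕ} {p : ℝ≥0∞} (hp : 2 ≤ p) {r : ℝ} (hr : 0 ≤ r)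
    {t : ℝ} (ht : 0 < t) (ht2 : t ≤ 2) (f : (Fin d → ℝ) → ℂ) (j : Fin d → ℕ) :
    ∑ k ∈ Fintype.piFinset (fun i => blockF (j i)),
        (ENNReal.ofReal (wt d k ^ r) * ‖fCoeff d f k‖ₑ) ^ t
      ≤ (ENNReal.ofReal ((2:ℝ) ^ (((∑ i, j i : ℕ) : ℝ) * (r + 1 / t - 1 / 2)))
          * LqNorm d p (blockProj d f j)) ^ t := by
  set Λ := Fintype.piFinset fun i => blockF (j i)
  set B : ℝ≥0∞ := 2 ^ ∑ i, j i
  set L := LqNorm d p (blockProj d f j)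
  have hB0 : B ≠ 0 := pow_ne_zero _ two_ne_zero
  have hBtop : B ≠ ∞ := pow_ne_top ofNat_ne_top
  have hweight (k) (hk : k ∈ Λ) : ENNReal.ofReal (wt d k ^ r) ≤ B ^ r := by
    have hwt : wt d k ^ r ≤ ((2:ℝ) ^ ∑ i, j i) ^ r :=
      Real.rpow_le_rpow (by unfold wt; positivity) (wt_le_of_mem_piFinset_blockF hk) hr
    calc ENNReal.ofReal (wt d k ^ r) ≤ ENNReal.ofReal (((2:ℝ) ^ ∑ i, j i) ^ r) := by gcongr
      _ = B ^ r := by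
        rw [← ENNReal.ofReal_rpow_of_nonneg (by positivity) hr, ENNReal.ofReal_pow zero_le_two,
          ENNReal.ofReal_ofNat]
  have hcard : (#Λ : ℝ≥0∞) ≤ B := by
    simpa only [B, Nat.cast_pow, Nat.cast_ofNat] using
      (Nat.cast_le (α := ℝ≥0∞)).mpr (card_piFinset_blockF_le j)
  have hparseval : (∑ k ∈ Λ, ‖fCoeff d f k‖ₑ ^ (2:ℝ)) ^ (t / 2) ≤ L ^ t := by
    have h := rpow_sum_enorm_fCoeff_sq_le_LqNorm_blockProj hp f j
    simp_rw [ENNReal.rpow_two]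
    rw [← one_div_mul_eq_div, ENNReal.rpow_mul]
    gcongr
  rw [ofReal_two_rpow_natCast_mul]
  calc ∑ k ∈ Λ, (ENNReal.ofReal (wt d k ^ r) * ‖fCoeff d f k‖ₑ) ^ t
      ≤ ∑ k ∈ Λ, (B ^ r * ‖fCoeff d f k‖ₑ) ^ t := by
        gcongr with k hk
        exact hweight k hk
    _ = B ^ (r * t) * ∑ k ∈ Λ, ‖fCoeff d f k‖ₑ ^ t := by
        simp_rw [Finset.mul_sum, ENNReal.mul_rpow_of_nonneg _ _ ht.le, ENNReal.rpow_mul]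
    _ ≤ B ^ (r * t) *
          ((#Λ : ℝ≥0∞) ^ (1 - t / 2) * (∑ k ∈ Λ, ‖fCoeff d f k‖ₑ ^ (2:ℝ)) ^ (t / 2)) := by
        gcongr
        exact ENNReal.sum_rpow_le_card_rpow_mul_sum_rpow Λ _ ht ht2
    _ ≤ B ^ (r * t) * (B ^ (1 - t / 2) * L ^ t) := by
        gcongr
        linarith
    _ = (B ^ (r + 1 / t - 1 / 2) * L) ^ t := by
        rw [ENNReal.mul_rpow_of_nonneg _ _ ht.le, ← mul_assoc, ← ENNReal.rpow_add _ _ hB0 hBtop,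
          ← ENNReal.rpow_mul]
        congr 2
        field_simp
        ring

lemma fCoeff_one (d : ℕ) (k : Fin d → ℤ) : fCoeff d (fun _ => 1) k = if k = 0 then 1 else 0 := by
  simp [fCoeff, integral_expk]

lemma blockProj_one (d : ℕ) (j : Fin d → ℕ) :
    blockProj d (fun _ => 1) j = fun _ => if j = 0 then 1 else 0 := by
  have hzero : (0 : Fin d → ℤ) ∈ Fintype.piFinset (fun i => blockF (j i)) ↔ j = 0 := by
    simp [mem_blockF_iff, funext_iff, eq_comm]
  funext x
  simp only [blockProj, fCoeff_one, ite_mul, one_mul, zero_mul, Finset.sum_ite_eq', hzero,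
    expk_zero]

lemma wienerNorm_one (d : ℕ) (r : ℝ) {θ : ℝ≥0∞} (hθ : 0 < θ) (hθtop : θ ≠ ∞) :
    wienerNorm d r θ (fun _ => 1) = 1 := by
  have ht : 0 < θ.toReal := toReal_pos hθ.ne' hθtop
  rw [wienerNorm, if_neg hθtop, tsum_eq_single 0 fun k hk => by simp [fCoeff_one, hk, ht]]
  simp [fCoeff_one, wt]

lemma besovNorm_one (d : ℕ) (s : ℝ) {p θ : ℝ≥0∞} (hp : p ≠ 0) (hθ : 0 < θ) (hθtop : θ ≠ ∞) :
    besovNorm d s p θ (fun _ => 1) = 1 := by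
  have ht : 0 < θ.toReal := toReal_pos hθ.ne' hθtop
  rw [besovNorm, if_neg hθtop,
    tsum_eq_single 0 fun j hj => by simp [blockProj_one, hj, LqNorm, ht]]
  have hL : LqNorm d p (fun _ => 1) = 1 := by
    simp [LqNorm, eLpNorm_const _ hp (IsProbabilityMeasure.ne_zero _)]
  simp [blockProj_one, hL]

theorem statement7_general (d : ℕ) (θ p : ℝ≥0∞) (hθ : 0 < θ) (hθ2 : θ ≤ 2)
    (hp2 : 2 ≤ p) (r : ℝ) (hr : 0 ≤ r) :
    (∀ f : (Fin d → ℝ) → ℂ, IntegrableOn f (cube d) →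
      wienerNorm d r θ f ≤ besovNorm d (r + 1/θ.toReal - 1/2) p θ f) ∧
    wienerNorm d r θ (fun _ => (1 : ℂ)) =
      besovNorm d (r + 1/θ.toReal - 1/2) p θ (fun _ => (1 : ℂ)) := by
  have hθtop : θ ≠ ∞ := ne_top_of_le_ne_top ofNat_ne_top hθ2
  have ht : 0 < θ.toReal := toReal_pos hθ.ne' hθtop
  have ht2 : θ.toReal ≤ 2 := by simpa using toReal_mono ofNat_ne_top hθ2
  refine ⟨fun f _ => ?_, ?_⟩
  · rw [wienerNorm, besovNorm, if_neg hθtop, if_neg hθtop, tsum_eq_tsum_sum_piFinset_blockF]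
    gcongr with j
    exact sum_rpow_le_rpow_besov_block hp2 hr ht ht2 f j
  · rw [wienerNorm_one d r hθ hθtop, besovNorm_one d _ (two_pos.trans_le hp2).ne' hθ hθtop]

/-- the embedding `S^{r+1/θ-1/2}_{p,θ}B ↪ S^r_θ A`
for `0 < θ ≤ 2 ≤ p < ∞` and `r ≥ 0` has norm exactly `1`. -/
theorem statement7 (d : ℕ) (hd : 1 ≤ d) (θ p : ℝ≥0∞) (hθ : 0 < θ) (hθ2 : θ ≤ 2)
    (hp2 : 2 ≤ p) (hp : p ≠ ∞) (r : ℝ) (hr : 0 ≤ r) :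
    (∀ f : (Fin d → ℝ) → ℂ, IntegrableOn f (cube d) →
      wienerNorm d r θ f ≤ besovNorm d (r + 1/θ.toReal - 1/2) p θ f) ∧
    wienerNorm d r θ (fun _ => (1 : ℂ)) =
      besovNorm d (r + 1/θ.toReal - 1/2) p θ (fun _ => (1 : ℂ)) :=
  statement7_general d θ p hθ hθ2 hp2 r hr

end Paper
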